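/- arXiv:2401.01190 — 6 statements merged into one kernel-verified Lean document; each statement's English description precedes it below -/
import Mathlib

section
/- For every pairwise reciprocal matrix A of size n and every vector w : Fin n → ℝ, the weighted least squares objective equals the quadratic form of Ḡ: ∑ᵢ ∑ⱼ (w i − A i j · w j)² = ∑ᵢ ∑ⱼ (Ḡ i j) · (w i) · (w j). -/
open Matrix BigOperators

/-- A pairwise reciprocal matrix (PRM): all entries positive and `A i j * A j i = 1`. -/
def IsPRM {n : ℕ} (A : Matrix (Fin n) (Fin n) ℝ) : Prop :=
  ∀ i j, 0 < A i j ∧ A i j * A j i = 1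

/-- The matrix `Ḡ` with diagonal `(n-1) + ∑_{k ≠ i} (A k i)^2` and
off-diagonal `-(A i j + A j i)`. -/
noncomputable def Gbar {n : ℕ} (A : Matrix (Fin n) (Fin n) ℝ) :
    Matrix (Fin n) (Fin n) ℝ :=
  Matrix.of fun i j =>
    if i = j then ((n : ℝ) - 1) + ∑ k ∈ Finset.univ.filter (fun k => k ≠ i), (A k i) ^ 2
    else -(A i j + A j i)

/-- The all-ones matrix `J`. -/
noncomputable def Jmat (n : ℕ) : Matrix (Fin n) (Fin n) ℝ :=
  Matrix.of fun _ _ => 1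

/-- `G = Ḡ + J`. -/
noncomputable def Gmat {n : ℕ} (A : Matrix (Fin n) (Fin n) ℝ) :
    Matrix (Fin n) (Fin n) ℝ :=
  Gbar A + Jmat n

/-- The weighted least squares objective `f(w) = ∑ i ∑ j (w i - A i j * w j)^2`. -/
noncomputable def wls {n : ℕ} (A : Matrix (Fin n) (Fin n) ℝ) (w : Fin n → ℝ) : ℝ :=
  ∑ i, ∑ j, (w i - A i j * w j) ^ 2
/-- For every PRM `A` of size `n` and every `w : Fin n → ℝ`,
`∑ i ∑ j (w i − A i j * w j)² = ∑ i ∑ j (Ḡ i j) * (w i) * (w j)`. -/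
theorem wls_eq_quadForm_Gbar {n : ℕ} (hn : 1 ≤ n) (A : Matrix (Fin n) (Fin n) ℝ)
    (hA : IsPRM A) (w : Fin n → ℝ) :
    wls A w = ∑ i, ∑ j, Gbar A i j * w i * w j := by
  classical
  have hAd : ∀ i, A i i = 1 := fun i => by nlinarith [(hA i i).1, (hA i i).2]
  have hG : ∀ i j, Gbar A i j * w i * w j =
      -((A i j + A j i) * (w i * w j)) +
        (if i = j then ((n : ℝ) + 1 + ∑ k ∈ Finset.univ.filter (fun k => k ≠ i), (A k i) ^ 2) * w i ^ 2 else 0) := by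
    intro i j
    by_cases h : i = j
    · subst h
      simp only [Gbar, Matrix.of_apply, if_pos rfl, hAd i, if_true]
      ring
    · simp only [Gbar, Matrix.of_apply, if_neg h]; ring
  have hswap : ∑ i, ∑ j, A j i * (w i * w j) = ∑ i, ∑ j, A i j * (w i * w j) := by
    rw [Finset.sum_comm]
    exact Finset.sum_congr rfl fun i _ => Finset.sum_congr rfl fun j _ => by ring
  have hRHS : ∑ i, ∑ j, Gbar A i j * w i * w j =
      -(∑ i, ∑ j, (A i j + A j i) * (w i * w j)) +
        ∑ i, ((n : ℝ) + 1 + ∑ k ∈ Finset.univ.filter (fun k => k ≠ i), (A k i) ^ 2) * w i ^ 2 := by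
    simp only [hG, Finset.sum_add_distrib, Finset.sum_ite_eq, Finset.mem_univ, if_true,
      Finset.sum_neg_distrib]
  have hLHS : wls A w =
      (∑ i : Fin n, ∑ j : Fin n, w i ^ 2) + (∑ i, ∑ j, (A i j) ^ 2 * w j ^ 2)
        - (∑ i, ∑ j, A i j * (w i * w j) + ∑ i, ∑ j, A j i * (w i * w j)) := by
    rw [hswap]
    unfold wls
    rw [← Finset.sum_add_distrib, ← Finset.sum_add_distrib, ← Finset.sum_sub_distrib]
    refine Finset.sum_congr rfl fun i _ => ?_
    rw [← Finset.sum_add_distrib, ← Finset.sum_add_distrib, ← Finset.sum_sub_distrib]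
    exact Finset.sum_congr rfl fun j _ => by ring
  -- the pure square terms
  have hsq1 : (∑ i : Fin n, ∑ j : Fin n, w i ^ 2) = ∑ i, (n : ℝ) * w i ^ 2 := by
    simp [Finset.sum_const, Finset.card_univ, mul_comm]
  have hsq2 : (∑ i : Fin n, ∑ j : Fin n, (A i j) ^ 2 * w j ^ 2)
      = ∑ i, (1 + ∑ k ∈ Finset.univ.filter (fun k => k ≠ i), (A k i) ^ 2) * w i ^ 2 := by
    rw [Finset.sum_comm]
    refine Finset.sum_congr rfl fun j _ => ?_
    rw [← Finset.sum_mul]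
    congr 1
    rw [Finset.filter_ne' Finset.univ j, ← Finset.add_sum_erase Finset.univ (fun k => (A k j)^2) (Finset.mem_univ j), hAd j]
    norm_num
  rw [hLHS, hRHS, hsq1, hsq2, ← Finset.sum_add_distrib, ← Finset.sum_add_distrib]
  have hsum : ∑ i, ∑ j, (A i j + A j i) * (w i * w j)
      = ∑ i, ∑ j, A i j * (w i * w j) + ∑ i, ∑ j, A j i * (w i * w j) := by
    rw [← Finset.sum_add_distrib]
    refine Finset.sum_congr rfl fun i _ => ?_
    rw [← Finset.sum_add_distrib]
    exact Finset.sum_congr rfl fun j _ => by ring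
  rw [hsum, ← Finset.sum_add_distrib]
  have hfin : (∑ i, ((n : ℝ) * w i ^ 2 + (1 + ∑ k ∈ Finset.univ.filter (fun k => k ≠ i), (A k i) ^ 2) * w i ^ 2))
      = ∑ i, ((n : ℝ) + 1 + ∑ k ∈ Finset.univ.filter (fun k => k ≠ i), (A k i) ^ 2) * w i ^ 2 :=
    Finset.sum_congr rfl fun i _ => by ring
  rw [hfin]
  ring
end

section
/- For every pairwise reciprocal matrix A of size n and every vector w : Fin n → ℝ, the quadratic form of G = Ḡ + J equals the WLS objective plus the squared coordinate sum: ∑ᵢ ∑ⱼ (G i j) · (w i) · (w j) = (∑ᵢ ∑ⱼ (w i − A i j · w j)²) + (∑ᵢ w i)². -/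
open Matrix BigOperators

section Aux
variable {n : ℕ}

lemma swap_ite_sum (g : Fin n → Fin n → ℝ) :
    ∑ i, ∑ j, (if i = j then (0:ℝ) else g j i)
      = ∑ i, ∑ j, (if i = j then (0:ℝ) else g i j) := by
  rw [Finset.sum_comm]
  refine Finset.sum_congr rfl fun i _ => Finset.sum_congr rfl fun j _ => ?_
  simp [eq_comm]

end Aux

/-- For every PRM `A` and every `w`, the quadratic form of `G = Ḡ + J`
equals the WLS objective plus the squared coordinate sum. -/
theorem quadForm_Gmat_eq_wls_add_sq_sum {n : ℕ} (hn : 1 ≤ n)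
    (A : Matrix (Fin n) (Fin n) ℝ) (hA : IsPRM A) (w : Fin n → ℝ) :
    ∑ i, ∑ j, Gmat A i j * w i * w j = wls A w + (∑ i, w i) ^ 2 := by
  have hAd : ∀ i, A i i = 1 := by
    intro i
    have h := (hA i i).2
    nlinarith [(hA i i).1]
  have hJ : ∑ i, ∑ j, Gmat A i j * w i * w j
      = (∑ i, ∑ j, Gbar A i j * w i * w j) + (∑ i, w i) ^ 2 := by
    simp only [Gmat, Matrix.add_apply, Jmat, Matrix.of_apply, add_mul, one_mul,
      Finset.sum_add_distrib]
    rw [sq, Finset.sum_mul_sum]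
  rw [hJ]
  congr 1
  have hw : wls A w = ∑ i, ∑ j, ((if i = j then (0:ℝ) else (w i)^2)
      - (if i = j then (0:ℝ) else A i j * w i * w j)
      - (if i = j then (0:ℝ) else A i j * w i * w j)
      + (if i = j then (0:ℝ) else (A i j)^2 * (w j)^2)) := by
    unfold wls
    refine Finset.sum_congr rfl fun i _ => Finset.sum_congr rfl fun j _ => ?_
    split_ifs with h
    · subst h; rw [hAd]; ring
    · ring
  have hg : ∀ i j, Gbar A i j * w i * w j
      = (if i = j then ((n:ℝ)-1) * (w i)^2 else 0)
      + (if i = j then (∑ k ∈ Finset.univ.filter (fun k => k ≠ i), (A k i) ^ 2) * (w i)^2 else 0)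
      - (if i = j then (0:ℝ) else A i j * w i * w j)
      - (if i = j then (0:ℝ) else A j i * w i * w j) := by
    intro i j
    simp only [Gbar, Matrix.of_apply]
    split_ifs with h
    · subst h; ring
    · ring
  simp only [hg]
  rw [hw]
  simp only [Finset.sum_sub_distrib, Finset.sum_add_distrib]
  have e1 : ∑ i, ∑ j, (if i = j then ((n:ℝ)-1) * (w i)^2 else 0)
      = ∑ i, ∑ j, (if i = j then (0:ℝ) else (w i)^2) := by
    refine Finset.sum_congr rfl fun i _ => ?_
    have h1 : ∑ j, (if i = j then ((n:ℝ)-1) * (w i)^2 else 0) = ((n:ℝ)-1) * (w i)^2 := by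
      simp
    have h2 : ∑ j, (if i = j then (0:ℝ) else (w i)^2)
        = ∑ j : Fin n, ((w i)^2 - if i = j then (w i)^2 else 0) := by
      refine Finset.sum_congr rfl fun j _ => ?_
      split_ifs <;> ring
    rw [h1, h2, Finset.sum_sub_distrib]
    simp [Finset.card_univ]
    ring
  have e2 : ∑ i, ∑ j, (if i = j then (∑ k ∈ Finset.univ.filter (fun k => k ≠ i), (A k i) ^ 2) * (w i)^2 else 0)
      = ∑ i, ∑ j, (if i = j then (0:ℝ) else (A i j)^2 * (w j)^2) := by
    rw [← swap_ite_sum (fun i j => (A i j)^2 * (w j)^2)]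
    refine Finset.sum_congr rfl fun i _ => ?_
    have h1 : ∑ j, (if i = j then (∑ k ∈ Finset.univ.filter (fun k => k ≠ i), (A k i) ^ 2) * (w i)^2 else 0)
        = (∑ k ∈ Finset.univ.filter (fun k => k ≠ i), (A k i) ^ 2) * (w i)^2 := by
      simp
    rw [h1, Finset.sum_mul, Finset.sum_filter]
    refine Finset.sum_congr rfl fun j _ => ?_
    by_cases h : i = j <;> simp [h, Ne, eq_comm]
  have e3 : ∑ i, ∑ j, (if i = j then (0:ℝ) else A j i * w i * w j)
      = ∑ i, ∑ j, (if i = j then (0:ℝ) else A i j * w i * w j) := by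
    rw [← swap_ite_sum (fun i j => A i j * w i * w j)]
    refine Finset.sum_congr rfl fun i _ => Finset.sum_congr rfl fun j _ => ?_
    split_ifs <;> ring
  rw [e1, e2, e3]; ring
end

section
/- For every pairwise reciprocal matrix A of size n, the matrix Ḡ is symmetric and positive semidefinite. -/
open Matrix BigOperators

/-!
`Ḡ = MᵀM` for the matrix `M` with rows `e_i - a_ij e_j` indexed by pairs `(i, j)`, so that
`wᵀḠw = ‖Mw‖² = ∑ i, ∑ j, (w i - a_ij w j)²` is the weighted least squares objective. A Gram
matrix is symmetric and positive semidefinite.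
-/

section ResidualMatrix

variable {ι R : Type*} [DecidableEq ι] [CommRing R]

def residualMatrix (A : Matrix ι ι R) : Matrix (ι × ι) ι R :=
  of fun p => Pi.single p.1 1 - A p.1 p.2 • Pi.single p.2 1

theorem residualMatrix_apply (A : Matrix ι ι R) (p : ι × ι) (k : ι) :
    residualMatrix A p k =
      (if k = p.1 then 1 else 0) - A p.1 p.2 * if k = p.2 then 1 else 0 := by
  simp [residualMatrix, Pi.single_apply]

variable [Fintype ι] {A : Matrix ι ι R}

theorem sum_sq_residualMatrix_apply (hA : ∀ i, A i i = 1) (k i : ι) :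
    ∑ j, residualMatrix A (k, j) i ^ 2 =
      if k = i then (Fintype.card ι - 1 : R) else A k i ^ 2 := by
  split_ifs with hki
  · subst hki
    have hrow : ∀ j, residualMatrix A (k, j) k = if j = k then 0 else 1 := fun j => by
      rcases eq_or_ne j k with rfl | hjk
      · simp [residualMatrix_apply, hA]
      · simp [residualMatrix_apply, hjk, hjk.symm]
    simp [hrow, ite_pow, Finset.sum_ite, Finset.filter_ne', Finset.card_erase_of_mem,
      Nat.cast_pred (Fintype.card_pos_iff.2 ⟨k⟩)]
  · simp [residualMatrix_apply, Ne.symm hki]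

theorem transpose_mul_residualMatrix_apply_self (hA : ∀ i, A i i = 1) (i : ι) :
    ((residualMatrix A)ᵀ * residualMatrix A) i i =
      (Fintype.card ι - 1 : R) + ∑ k ∈ Finset.univ.filter (· ≠ i), A k i ^ 2 := by
  simp only [mul_apply, transpose_apply, Fintype.sum_prod_type, ← sq,
    sum_sq_residualMatrix_apply hA, Finset.sum_ite, Finset.filter_eq']
  simp

theorem transpose_mul_residualMatrix_apply_of_ne {i j : ι} (hij : i ≠ j) :
    ((residualMatrix A)ᵀ * residualMatrix A) i j = -(A i j + A j i) := by
  simp [mul_apply, Fintype.sum_prod_type, residualMatrix_apply, sub_mul, mul_sub, ite_mul,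
    mul_ite, Finset.sum_sub_distrib, hij]
  ring

end ResidualMatrix

theorem Gbar_eq_transpose_mul_residualMatrix {n : ℕ} {A : Matrix (Fin n) (Fin n) ℝ}
    (hA : ∀ i, A i i = 1) : Gbar A = (residualMatrix A)ᵀ * residualMatrix A := by
  ext i j
  rcases eq_or_ne i j with rfl | hij
  · simp [Gbar, transpose_mul_residualMatrix_apply_self hA]
  · simp [Gbar, hij, transpose_mul_residualMatrix_apply_of_ne hij]

theorem IsPRM.diag_eq_one {n : ℕ} {A : Matrix (Fin n) (Fin n) ℝ} (hA : IsPRM A) (i : Fin n) :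
    A i i = 1 :=
  (mul_self_eq_one_iff.1 (hA i i).2).resolve_right fun h => by linarith [(hA i i).1]

theorem Gbar_isSymm_posSemidef_general {n : ℕ}
    (A : Matrix (Fin n) (Fin n) ℝ) (hA : IsPRM A) :
    (Gbar A).IsSymm ∧ (Gbar A).PosSemidef := by
  rw [Gbar_eq_transpose_mul_residualMatrix hA.diag_eq_one]
  have hpsd : ((residualMatrix A)ᵀ * residualMatrix A).PosSemidef := by
    simpa using posSemidef_conjTranspose_mul_self (residualMatrix A)
  exact ⟨isHermitian_iff_isSymm.1 hpsd.isHermitian, hpsd⟩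

/-- For every PRM `A`, the matrix `Ḡ` is symmetric and positive
semidefinite. -/
theorem Gbar_isSymm_posSemidef {n : ℕ} (hn : 1 ≤ n)
    (A : Matrix (Fin n) (Fin n) ℝ) (hA : IsPRM A) :
    (Gbar A).IsSymm ∧ (Gbar A).PosSemidef :=
  Gbar_isSymm_posSemidef_general A hA
end

section
/- For every pairwise reciprocal matrix A of size n, if w : Fin n → ℝ satisfies Ḡ.mulVec w = 0 and w ≠ 0, then every entry of w is nonzero and all entries have the same strict sign; in particular w i · w j > 0 for all i, j, and ∑ᵢ w i ≠ 0. -/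
open Matrix BigOperators

section
variable {n : ℕ}

lemma quad_form_eq (A : Matrix (Fin n) (Fin n) ℝ) (hA : IsPRM A) (w : Fin n → ℝ) :
    ∑ i, w i * (Gbar A).mulVec w i = wls A w := by
  have hd : ∀ i, A i i = 1 := fun i => by nlinarith [(hA i i).1, (hA i i).2]
  have lhs_eq : ∑ i, w i * (Gbar A).mulVec w i
      = (∑ i, (n : ℝ) * w i ^ 2 + ∑ i, ∑ k, A k i ^ 2 * w i ^ 2)
        - ∑ i, ∑ j, (A i j + A j i) * (w i * w j) := by
    rw [← Finset.sum_add_distrib, ← Finset.sum_sub_distrib]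
    refine Finset.sum_congr rfl fun i _ => ?_
    have e3 : Gbar A i i = ((n:ℝ) - 1) + (∑ k, A k i ^ 2 - A i i ^ 2) := by
      simp only [Gbar, Matrix.of_apply, eq_self_iff_true, if_true, Finset.filter_ne']
      rw [Finset.sum_erase_eq_sub (Finset.mem_univ i)]
    have e1 : ∑ j ∈ Finset.univ.erase i, Gbar A i j * w j
        = ∑ j ∈ Finset.univ.erase i, -(A i j + A j i) * w j := by
      refine Finset.sum_congr rfl fun j hj => ?_
      rw [Finset.mem_erase] at hj
      simp [Gbar, (Ne.symm hj.1 : i ≠ j)]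
    have e0 : (Gbar A).mulVec w i = Gbar A i i * w i + ∑ j ∈ Finset.univ.erase i, Gbar A i j * w j := by
      rw [Matrix.mulVec, dotProduct,
        ← Finset.add_sum_erase Finset.univ (fun j => Gbar A i j * w j) (Finset.mem_univ i)]
    rw [e0, e1, Finset.sum_erase_eq_sub (Finset.mem_univ i), e3, hd i]
    have t1 : ∑ k, A k i ^ 2 * w i ^ 2 = (∑ k, A k i ^ 2) * w i ^ 2 :=
      (Finset.sum_mul _ _ _).symm
    have t2 : ∑ j, (A i j + A j i) * (w i * w j)
        = -(w i * ∑ j, -(A i j + A j i) * w j) := by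
      rw [Finset.mul_sum, ← Finset.sum_neg_distrib]
      exact Finset.sum_congr rfl fun j _ => by ring
    rw [t1, t2]
    ring
  have rhs_eq : wls A w
      = (∑ i, (n : ℝ) * w i ^ 2 + ∑ i, ∑ j, A i j ^ 2 * w j ^ 2)
        - 2 * ∑ i, ∑ j, A i j * (w i * w j) := by
    rw [Finset.mul_sum, ← Finset.sum_add_distrib, ← Finset.sum_sub_distrib, wls]
    refine Finset.sum_congr rfl fun i _ => ?_
    have t0 : ∑ j, (w i - A i j * w j) ^ 2
        = ∑ j, (w i ^ 2 + (A i j ^ 2 * w j ^ 2 - 2 * (A i j * (w i * w j)))) :=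
      Finset.sum_congr rfl fun j _ => by ring
    rw [t0, Finset.sum_add_distrib, Finset.sum_sub_distrib, Finset.sum_const,
      Finset.card_univ, Fintype.card_fin, nsmul_eq_mul, ← Finset.mul_sum]
    ring
  have ha : ∑ i, ∑ k, A k i ^ 2 * w i ^ 2 = ∑ i, ∑ j, A i j ^ 2 * w j ^ 2 :=
    Finset.sum_comm
  have hb : ∑ i, ∑ j, (A i j + A j i) * (w i * w j)
      = 2 * ∑ i, ∑ j, A i j * (w i * w j) := by
    have hb1 : ∑ i, ∑ j, A j i * (w i * w j) = ∑ i, ∑ j, A i j * (w i * w j) := by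
      rw [Finset.sum_comm]
      exact Finset.sum_congr rfl fun i _ => Finset.sum_congr rfl fun j _ => by ring
    have hb2 : ∑ i, ∑ j, (A i j + A j i) * (w i * w j)
        = ∑ i, ∑ j, A i j * (w i * w j) + ∑ i, ∑ j, A j i * (w i * w j) := by
      rw [← Finset.sum_add_distrib]
      refine Finset.sum_congr rfl fun i _ => ?_
      rw [← Finset.sum_add_distrib]
      exact Finset.sum_congr rfl fun j _ => by ring
    rw [hb2, hb1]; ring
  rw [lhs_eq, rhs_eq, ha, hb]

end

/-- For every PRM `A`, if `Ḡ.mulVec w = 0` and `w ≠ 0`, then every entry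
of `w` is nonzero, all entries have the same strict sign (so `w i * w j > 0` for all
`i j`), and `∑ i, w i ≠ 0`. -/
theorem kernel_vector_entries_same_sign {n : ℕ} (hn : 1 ≤ n)
    (A : Matrix (Fin n) (Fin n) ℝ) (hA : IsPRM A) (w : Fin n → ℝ)
    (hw : (Gbar A).mulVec w = 0) (hw0 : w ≠ 0) :
    (∀ i, w i ≠ 0) ∧ (∀ i j, 0 < w i * w j) ∧ (∑ i, w i) ≠ 0 := by
  have hpos : ∀ i j, 0 < A i j := fun i j => (hA i j).1
  have hwls : wls A w = 0 := by
    rw [← quad_form_eq A hA w, hw]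
    simp
  have hprop : ∀ i j, w i = A i j * w j := by
    have h1 := (Finset.sum_eq_zero_iff_of_nonneg
      (fun i _ => Finset.sum_nonneg fun j _ => sq_nonneg (w i - A i j * w j))).mp hwls
    intro i j
    have h2 := (Finset.sum_eq_zero_iff_of_nonneg
      (fun j _ => sq_nonneg (w i - A i j * w j))).mp (h1 i (Finset.mem_univ i)) j
      (Finset.mem_univ j)
    have := pow_eq_zero_iff (n := 2) (by norm_num) |>.mp h2
    linarith [this]
  obtain ⟨j0, hj0⟩ := Function.ne_iff.mp hw0
  simp only [Pi.zero_apply] at hj0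
  have hne : ∀ i, w i ≠ 0 := fun i => by
    rw [hprop i j0]; exact mul_ne_zero (ne_of_gt (hpos i j0)) hj0
  have hmul : ∀ i j, 0 < w i * w j := by
    intro i j
    rw [hprop i j0, hprop j j0]
    have h1 := hpos i j0
    have h2 := hpos j j0
    have h3 : 0 < w j0 ^ 2 := pow_two_pos_of_ne_zero hj0
    have : A i j0 * w j0 * (A j j0 * w j0) = (A i j0 * A j j0) * w j0 ^ 2 := by ring
    rw [this]
    exact mul_pos (mul_pos h1 h2) h3
  refine ⟨hne, hmul, ?_⟩
  have hne' : Nonempty (Fin n) := ⟨⟨0, hn⟩⟩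
  rcases lt_or_gt_of_ne hj0 with h | h
  · have : ∑ i, w i < 0 := Finset.sum_neg (fun i _ => by
      rw [hprop i j0]; exact mul_neg_of_pos_of_neg (hpos i j0) h) Finset.univ_nonempty
    linarith
  · have : 0 < ∑ i, w i := Finset.sum_pos (fun i _ => by
      rw [hprop i j0]; exact mul_pos (hpos i j0) h) Finset.univ_nonempty
    linarith
end

section
/- For every pairwise reciprocal matrix A of size n ≥ 1, the Pseudo-IGM vector w* := (1/c) • (G⁻¹.mulVec 1), where c = ∑ᵢ ∑ⱼ (G⁻¹) i j, satisfies ∑ᵢ w* i = 1 and minimizes the WLS objective over the constraint set: for every w : Fin n → ℝ with ∑ᵢ w i = 1, one has f(w*) ≤ f(w). -/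
open Matrix BigOperators

/-! Since `A i i = 1`, `Ḡ` is the matrix of the quadratic form `f`, so
`xᵀ G x = f x + (∑ i, x i)²`. This form is positive definite: `f x = 0` forces `x i = A i j * x j`,
so `x` is a multiple of a column of the positive matrix `A`, and then `∑ i, x i = 0` forces `x = 0`.
Because `G w*` is a multiple of `1`, the vector `w*` is `G`-orthogonal to the hyperplane
`∑ i, w i = 0`, so it minimizes `xᵀ G x = f x + 1` on the affine hyperplane `∑ i, w i = 1`. -/

theorem Matrix.PosSemidef.dotProduct_mulVec_le_of_mulVec_eq_smul_one {ι : Type*} [Fintype ι]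
    {M : Matrix ι ι ℝ} (hM : M.PosSemidef) {x y : ι → ℝ} {c : ℝ} (hx : M *ᵥ x = c • 1)
    (hsum : ∑ i, y i = ∑ i, x i) : x ⬝ᵥ M *ᵥ x ≤ y ⬝ᵥ M *ᵥ y := by
  set d := y - x
  have hd : ∑ i, d i = 0 := by simp [d, Finset.sum_sub_distrib, hsum]
  have hdx : d ⬝ᵥ M *ᵥ x = 0 := by simp [hx, dotProduct, hd, ← Finset.sum_mul]
  have hxd : x ⬝ᵥ M *ᵥ d = 0 := by
    rw [dotProduct_mulVec, ← mulVec_transpose, (isHermitian_iff_isSymm.mp hM.isHermitian).eq,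
      dotProduct_comm, hdx]
  have hdd : 0 ≤ d ⬝ᵥ M *ᵥ d := by simpa using hM.dotProduct_mulVec_nonneg d
  rw [show y = x + d by simp [d], mulVec_add, dotProduct_add, add_dotProduct, add_dotProduct,
    hxd, hdx]
  linarith

section WLS

variable {n : ℕ} {A : Matrix (Fin n) (Fin n) ℝ}

theorem IsPRM.apply_self (hA : IsPRM A) (i : Fin n) : A i i = 1 := by
  nlinarith [hA i i]

theorem wls_eq_dotProduct_mulVec (A : Matrix (Fin n) (Fin n) ℝ) (x : Fin n → ℝ) :
    wls A x = x ⬝ᵥ ((n : ℝ) • 1 + diagonal (fun j => ∑ i, A i j ^ 2) - A - Aᵀ) *ᵥ x := by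
  have hAt : x ⬝ᵥ Aᵀ *ᵥ x = x ⬝ᵥ A *ᵥ x := by
    rw [dotProduct_mulVec, vecMul_transpose, dotProduct_comm]
  have hdiag : x ⬝ᵥ diagonal (fun j => ∑ i, A i j ^ 2) *ᵥ x = ∑ i, ∑ j, (A i j * x j) ^ 2 := by
    simp only [dotProduct, mulVec_diagonal, Finset.mul_sum, Finset.sum_mul]
    rw [Finset.sum_comm]
    exact Finset.sum_congr rfl fun _ _ => Finset.sum_congr rfl fun _ _ => by ring
  have hA : x ⬝ᵥ A *ᵥ x = ∑ i, ∑ j, x i * (A i j * x j) := by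
    simp only [dotProduct, mulVec, Finset.mul_sum]
  simp only [sub_mulVec, add_mulVec, smul_mulVec, one_mulVec, dotProduct_sub, dotProduct_add,
    dotProduct_smul, hAt, hdiag, hA, smul_eq_mul]
  simp only [wls, sub_sq, Finset.sum_add_distrib, Finset.sum_sub_distrib, Finset.sum_const,
    Finset.card_univ, Fintype.card_fin, nsmul_eq_mul, dotProduct, mul_assoc, ← Finset.mul_sum]
  simp only [sq]
  ring

theorem Gbar_eq_of_apply_self (hdiag : ∀ i, A i i = 1) :
    Gbar A = (n : ℝ) • 1 + diagonal (fun j => ∑ i, A i j ^ 2) - A - Aᵀ := by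
  ext i j
  rcases eq_or_ne i j with rfl | hij
  · simp [Gbar, hdiag, Finset.filter_ne', Finset.sum_erase_eq_sub]
    ring
  · simp [Gbar, hij]
    ring

theorem dotProduct_mulVec_Gmat (hdiag : ∀ i, A i i = 1) (x : Fin n → ℝ) :
    x ⬝ᵥ Gmat A *ᵥ x = wls A x + (∑ i, x i) ^ 2 := by
  rw [Gmat, add_mulVec, dotProduct_add, Gbar_eq_of_apply_self hdiag,
    ← wls_eq_dotProduct_mulVec]
  simp [Jmat, dotProduct, mulVec, sq, ← Finset.sum_mul]

theorem wls_nonneg (A : Matrix (Fin n) (Fin n) ℝ) (x : Fin n → ℝ) : 0 ≤ wls A x := by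
  unfold wls
  positivity

theorem apply_eq_mul_of_wls_eq_zero {x : Fin n → ℝ} (h : wls A x = 0) (i j : Fin n) :
    x i = A i j * x j := by
  have hsq : ∀ i j, 0 ≤ (x i - A i j * x j) ^ 2 := fun _ _ => sq_nonneg _
  have hrow := (Finset.sum_eq_zero_iff_of_nonneg fun i _ =>
    Finset.sum_nonneg fun j _ => hsq i j).mp h i (Finset.mem_univ i)
  have hij := (Finset.sum_eq_zero_iff_of_nonneg fun j _ => hsq i j).mp hrow j (Finset.mem_univ j)
  linarith [pow_eq_zero_iff two_ne_zero |>.mp hij]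

theorem eq_zero_of_wls_eq_zero (hpos : ∀ i j, 0 < A i j) {x : Fin n → ℝ} (h : wls A x = 0)
    (hsum : ∑ i, x i = 0) : x = 0 := by
  funext j
  have hcol : (∑ i, A i j) * x j = 0 := by
    rw [Finset.sum_mul, ← hsum]
    exact Finset.sum_congr rfl fun i _ => (apply_eq_mul_of_wls_eq_zero h i j).symm
  exact (mul_eq_zero.mp hcol).resolve_left
    (Finset.sum_pos (fun i _ => hpos i j) ⟨j, Finset.mem_univ j⟩).ne'

theorem posDef_Gmat (hA : IsPRM A) : (Gmat A).PosDef := by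
  refine .of_dotProduct_mulVec_pos (IsHermitian.ext fun i j => ?_) fun x hx => ?_
  · rcases eq_or_ne i j with rfl | hij
    · rfl
    · simp [Gmat, Gbar, Jmat, hij, hij.symm, add_comm]
  · rw [star_trivial, dotProduct_mulVec_Gmat hA.apply_self]
    refine lt_of_le_of_ne (add_nonneg (wls_nonneg A x) (sq_nonneg _)) fun h => hx ?_
    obtain ⟨hf, hs⟩ := (add_eq_zero_iff_of_nonneg (wls_nonneg A x) (sq_nonneg _)).mp h.symm
    exact eq_zero_of_wls_eq_zero (fun i j => (hA i j).1) hf (pow_eq_zero_iff two_ne_zero |>.mp hs)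

end WLS

/-- the Pseudo-IGM vector `w* = (1/c) • (G⁻¹.mulVec 1)` with
`c = ∑ i ∑ j (G⁻¹) i j` sums to 1 and minimizes the WLS objective over the
constraint set `{w : ∑ i, w i = 1}`. -/
theorem pigm_sums_to_one_and_minimizes {n : ℕ} (hn : 1 ≤ n)
    (A : Matrix (Fin n) (Fin n) ℝ) (hA : IsPRM A) :
    let c : ℝ := ∑ i, ∑ j, (Gmat A)⁻¹ i j
    let wstar : Fin n → ℝ := (1 / c) • ((Gmat A)⁻¹.mulVec 1)
    (∑ i, wstar i = 1) ∧
    ∀ w : Fin n → ℝ, (∑ i, w i = 1) → wls A wstar ≤ wls A w := by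
  intro c wstar
  have hG := posDef_Gmat hA
  have : Nonempty (Fin n) := ⟨⟨0, hn⟩⟩
  have hc : c = 1 ⬝ᵥ (Gmat A)⁻¹ *ᵥ 1 := by simp [c, dotProduct, mulVec]
  have hc_pos : 0 < c := by simpa [hc] using hG.inv.dotProduct_mulVec_pos one_ne_zero
  have hsum : ∑ i, wstar i = 1 := by
    rw [show ∑ i, wstar i = 1 / c * c by simp [wstar, ← Finset.mul_sum, hc, dotProduct]]
    exact one_div_mul_cancel hc_pos.ne'
  have hGw : Gmat A *ᵥ wstar = (1 / c) • 1 := by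
    rw [mulVec_smul, mulVec_mulVec, mul_nonsing_inv _ ((isUnit_iff_isUnit_det _).mp hG.isUnit),
      one_mulVec]
  refine ⟨hsum, fun w hw => ?_⟩
  have hmin := hG.posSemidef.dotProduct_mulVec_le_of_mulVec_eq_smul_one hGw (hw.trans hsum.symm)
  rw [dotProduct_mulVec_Gmat hA.apply_self, dotProduct_mulVec_Gmat hA.apply_self, hw, hsum] at hmin
  linarith
end

section
/- For every pairwise reciprocal matrix A of size n, the WLS objective f : (Fin n → ℝ) → ℝ is Fréchet differentiable at every point w, with derivative given by the linear map v ↦ 2 · ((Ḡ.mulVec w) ⬝ᵥ v); in particular, for each coordinate k, the partial derivative of f at w is ∂f/∂w_k = 2·[((n−1) + ∑_{i ≠ k} (A i k)²)·(w k) − ∑_{i ≠ k} (A i k + A k i)·(w i)]. -/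
/-!
Each summand of `f` is the square of the linear form `w ↦ w i - A i j * w j`, so
`f'(w) v = 2 ∑ i, ∑ j, (w i - A i j * w j) * (v i - A i j * v j)`. Expanding, this polar form is
`(M w) ⬝ᵥ v` with `M = n • 1 + diagonal (∑ k, A k i ^ 2) - (A + Aᵀ)`, and `M = Ḡ` since the
diagonal of a pairwise reciprocal matrix is `1`.
-/

open Matrix BigOperators

theorem hasFDerivAt_wls {n : ℕ} (A : Matrix (Fin n) (Fin n) ℝ) (w : Fin n → ℝ) :
    HasFDerivAt (wls A)
      (∑ i, ∑ j, (2 * (w i - A i j * w j)) •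
        (ContinuousLinearMap.proj i - A i j • ContinuousLinearMap.proj j :
          (Fin n → ℝ) →L[ℝ] ℝ)) w := by
  refine HasFDerivAt.fun_sum fun i _ => HasFDerivAt.fun_sum fun j _ => ?_
  have h : HasFDerivAt (fun y : Fin n → ℝ => y i - A i j * y j)
      (ContinuousLinearMap.proj i - A i j • ContinuousLinearMap.proj j :
        (Fin n → ℝ) →L[ℝ] ℝ) w :=
    (hasFDerivAt_apply i w).sub ((hasFDerivAt_apply j w).const_mul (A i j))
  refine (h.pow 2).congr_fderiv ?_
  norm_num

theorem sum_sum_sub_mul_mul_sub_mul {ι : Type*} [Fintype ι] [DecidableEq ι]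
    (A : Matrix ι ι ℝ) (w v : ι → ℝ) :
    ∑ i, ∑ j, (w i - A i j * w j) * (v i - A i j * v j) =
      ((Fintype.card ι : ℝ) • 1 + diagonal (fun i => ∑ k, A k i ^ 2) - (A + Aᵀ)) *ᵥ w ⬝ᵥ v := by
  have expand : ∀ i j, (w i - A i j * w j) * (v i - A i j * v j) =
      w i * v i + A i j ^ 2 * w j * v j - (A i j * w j * v i + A i j * w i * v j) :=
    fun i j => by ring
  simp only [sub_mulVec, add_mulVec, smul_mulVec, one_mulVec, sub_dotProduct, add_dotProduct,
    smul_dotProduct]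
  simp only [expand, Finset.sum_add_distrib, Finset.sum_sub_distrib, Finset.sum_const,
    Finset.card_univ, nsmul_eq_mul, smul_eq_mul, dotProduct, mulVec, diagonal_apply, ite_mul,
    zero_mul, Finset.sum_ite_eq, Finset.mem_univ, if_true, transpose_apply, Finset.sum_mul,
    Finset.mul_sum]
  rw [Finset.sum_comm (f := fun i j => A i j ^ 2 * w j * v j),
    Finset.sum_comm (f := fun i j => A i j * w i * v j)]

theorem gbar_eq_of_diag_eq_one {n : ℕ} {A : Matrix (Fin n) (Fin n) ℝ} (hA : ∀ i, A i i = 1) :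
    Gbar A = (n : ℝ) • 1 + diagonal (fun i => ∑ k, A k i ^ 2) - (A + Aᵀ) := by
  ext i j
  rcases eq_or_ne i j with rfl | hij
  · simp [Gbar, Finset.filter_ne', Finset.sum_erase_eq_sub, hA]
    ring
  · simp [Gbar, hij]

theorem gbar_mulVec_apply {n : ℕ} (A : Matrix (Fin n) (Fin n) ℝ) (w : Fin n → ℝ) (k : Fin n) :
    (Gbar A *ᵥ w) k =
      (((n : ℝ) - 1) + ∑ i ∈ Finset.univ.filter (fun i => i ≠ k), (A i k) ^ 2) * w k
        - ∑ i ∈ Finset.univ.filter (fun i => i ≠ k), (A i k + A k i) * w i := by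
  rw [mulVec, dotProduct, ← Finset.add_sum_erase _ _ (Finset.mem_univ k), Finset.filter_ne',
    sub_eq_add_neg, ← Finset.sum_neg_distrib]
  congr 1
  · simp [Gbar, Finset.filter_ne']
  · refine Finset.sum_congr rfl fun i hi => ?_
    simp [Gbar, (Finset.ne_of_mem_erase hi).symm]
    ring

theorem wls_fderiv_general {n : ℕ}
    (A : Matrix (Fin n) (Fin n) ℝ) (hA : IsPRM A) (w : Fin n → ℝ) :
    DifferentiableAt ℝ (wls A) w ∧
    (∀ v : Fin n → ℝ, fderiv ℝ (wls A) w v = 2 * ((Gbar A).mulVec w ⬝ᵥ v)) ∧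
    (∀ k : Fin n, fderiv ℝ (wls A) w (Pi.single k 1) =
      2 * ((((n : ℝ) - 1) + ∑ i ∈ Finset.univ.filter (fun i => i ≠ k), (A i k) ^ 2) * w k
        - ∑ i ∈ Finset.univ.filter (fun i => i ≠ k), (A i k + A k i) * w i)) := by
  have hderiv := hasFDerivAt_wls A w
  have hvalue : ∀ v, fderiv ℝ (wls A) w v = 2 * (Gbar A *ᵥ w ⬝ᵥ v) := fun v =>
    calc fderiv ℝ (wls A) w v
        = 2 * ∑ i, ∑ j, (w i - A i j * w j) * (v i - A i j * v j) := by
          simp [hderiv.fderiv, Finset.mul_sum, mul_assoc]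
      _ = 2 * (Gbar A *ᵥ w ⬝ᵥ v) := by
          rw [sum_sum_sub_mul_mul_sub_mul, Fintype.card_fin, gbar_eq_of_diag_eq_one hA.diag_eq_one]
  refine ⟨hderiv.differentiableAt, hvalue, fun k => ?_⟩
  rw [hvalue, dotProduct_single, mul_one, gbar_mulVec_apply]

/-- the WLS objective is Fréchet differentiable at every `w`, with
derivative `v ↦ 2 * ((Ḡ.mulVec w) ⬝ᵥ v)`; in particular the `k`-th partial derivative
is `2 * (((n−1) + ∑_{i ≠ k} (A i k)²) * w k − ∑_{i ≠ k} (A i k + A k i) * w i)`. -/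
theorem wls_fderiv {n : ℕ} (hn : 1 ≤ n)
    (A : Matrix (Fin n) (Fin n) ℝ) (hA : IsPRM A) (w : Fin n → ℝ) :
    DifferentiableAt ℝ (wls A) w ∧
    (∀ v : Fin n → ℝ, fderiv ℝ (wls A) w v = 2 * ((Gbar A).mulVec w ⬝ᵥ v)) ∧
    (∀ k : Fin n, fderiv ℝ (wls A) w (Pi.single k 1) =
      2 * ((((n : ℝ) - 1) + ∑ i ∈ Finset.univ.filter (fun i => i ≠ k), (A i k) ^ 2) * w k
        - ∑ i ∈ Finset.univ.filter (fun i => i ≠ k), (A i k + A k i) * w i)) :=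
  wls_fderiv_general A hA w
end
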